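/- Fix n and suppose L : ℝ → Matrix n n ℝ is differentiable and satisfies the full symmetric Toda equation L'(t) = ⁅L(t), M(L(t))⁆ for all t, with L(0) symmetric (L(0)ᵀ = L(0)). Then L(t) is symmetric for all t ∈ ℝ. (The subspace 𝔭 of symmetric matrices is invariant under the Toda flow.) -/

import Mathlib

open Matrix

/-- The Toda projector: `M(L)_{ab} = L_{ab}` for `a < b`, `-L_{ab}` for `a > b`, `0` on
the diagonal. -/
def todaM {n : ℕ} (L : Matrix (Fin n) (Fin n) ℝ) : Matrix (Fin n) (Fin n) ℝ :=
  Matrix.of fun a b => if a < b then L a b else if b < a then -L a b else 0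

/-- Entrywise derivative of a matrix-valued curve. -/
noncomputable def matDeriv {n : ℕ} (γ : ℝ → Matrix (Fin n) (Fin n) ℝ) (t : ℝ) :
    Matrix (Fin n) (Fin n) ℝ :=
  Matrix.of fun a b => deriv (fun s => γ s a b) t

lemma todaM_transpose {n : ℕ} (X : Matrix (Fin n) (Fin n) ℝ) :
    todaM Xᵀ = -(todaM X)ᵀ := by
  ext a b
  simp only [todaM, Matrix.of_apply, Matrix.transpose_apply, Matrix.neg_apply]
  rcases lt_trichotomy a b with h | h | h
  · simp [h, h.not_gt]
  · simp [h, lt_irrefl]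
  · simp [h, h.not_gt]

lemma bracket_transpose {n : ℕ} (X : Matrix (Fin n) (Fin n) ℝ) :
    ⁅Xᵀ, todaM Xᵀ⁆ = ⁅X, todaM X⁆ᵀ := by
  rw [todaM_transpose]
  simp only [Ring.lie_def, Matrix.transpose_sub, Matrix.transpose_mul, mul_neg, neg_mul,
    sub_neg_eq_add]
  abel

/-- The Toda vector field as a map on the Pi type. -/
noncomputable def todaV (n : ℕ) : (Fin n → Fin n → ℝ) → (Fin n → Fin n → ℝ) :=
  fun X a b => (⁅Matrix.of X, todaM (Matrix.of X)⁆ : Matrix (Fin n) (Fin n) ℝ) a b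

lemma contDiff_todaV (n : ℕ) : ContDiff ℝ 1 (todaV n) := by
  rw [contDiff_pi]
  intro a
  rw [contDiff_pi]
  intro b
  have : (fun X : Fin n → Fin n → ℝ => todaV n X a b) =
      fun X => (∑ c, X a c * todaM (Matrix.of X) c b) -
        ∑ c, todaM (Matrix.of X) a c * X c b := by
    funext X
    simp [todaV, Ring.lie_def, Matrix.sub_apply, Matrix.mul_apply]
  rw [this]
  apply ContDiff.sub
  · apply ContDiff.sum
    intro c _
    apply ContDiff.mul (contDiff_apply_apply ℝ ℝ a c)
    simp only [todaM, Matrix.of_apply]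
    rcases lt_trichotomy c b with h | h | h
    · simpa [h, h.not_gt] using contDiff_apply_apply ℝ ℝ c b
    · simp [h, lt_irrefl]
      exact contDiff_const
    · simpa [h, h.not_gt] using (contDiff_apply_apply ℝ ℝ c b).neg
  · apply ContDiff.sum
    intro c _
    apply ContDiff.mul _ (contDiff_apply_apply ℝ ℝ c b)
    simp only [todaM, Matrix.of_apply]
    rcases lt_trichotomy a c with h | h | h
    · simpa [h, h.not_gt] using contDiff_apply_apply ℝ ℝ a c
    · simp [h, lt_irrefl]
      exact contDiff_const
    · simpa [h, h.not_gt] using (contDiff_apply_apply ℝ ℝ a c).neg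

/-- The subspace of symmetric matrices is invariant under the full symmetric Toda flow:
if `L' = ⁅L, M(L)⁆` and `L 0` is symmetric, then `L t` is symmetric for all `t`. -/
theorem toda_flow_preserves_symmetric {n : ℕ}
    (L : ℝ → Matrix (Fin n) (Fin n) ℝ)
    (hdiff : ∀ a b : Fin n, Differentiable ℝ fun t => L t a b)
    (hode : ∀ t : ℝ, matDeriv L t = ⁅L t, todaM (L t)⁆)
    (h0 : (L 0)ᵀ = L 0) :
    ∀ t : ℝ, (L t)ᵀ = L t := by
  -- work in the Pi type
  set f : ℝ → (Fin n → Fin n → ℝ) := fun t a b => L t a b with hf_def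
  set g : ℝ → (Fin n → Fin n → ℝ) := fun t a b => L t b a with hg_def
  have hof : ∀ t, Matrix.of (f t) = L t := fun t => rfl
  have hog : ∀ t, Matrix.of (g t) = (L t)ᵀ := fun t => rfl
  have hderiv_entry : ∀ (t : ℝ) (a b : Fin n),
      HasDerivAt (fun s => L s a b) ((⁅L t, todaM (L t)⁆ : Matrix (Fin n) (Fin n) ℝ) a b) t := by
    intro t a b
    have h := ((hdiff a b) t).hasDerivAt
    have : deriv (fun s => L s a b) t = (⁅L t, todaM (L t)⁆ : Matrix (Fin n) (Fin n) ℝ) a b := by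
      have := congrFun (congrFun (hode t) a) b
      simpa [matDeriv] using this
    rwa [this] at h
  have hf' : ∀ t, HasDerivAt f (todaV n (f t)) t := by
    intro t
    rw [hasDerivAt_pi]
    intro a
    rw [hasDerivAt_pi]
    intro b
    have : todaV n (f t) a b = (⁅L t, todaM (L t)⁆ : Matrix (Fin n) (Fin n) ℝ) a b := by
      simp [todaV, hof]
    rw [this]
    exact hderiv_entry t a b
  have hg' : ∀ t, HasDerivAt g (todaV n (g t)) t := by
    intro t
    rw [hasDerivAt_pi]
    intro a
    rw [hasDerivAt_pi]
    intro b
    have : todaV n (g t) a b = (⁅L t, todaM (L t)⁆ : Matrix (Fin n) (Fin n) ℝ) b a := by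
      rw [todaV, hog, bracket_transpose]
      rfl
    rw [this]
    exact hderiv_entry t b a
  have hf_cont : Continuous f := by
    apply continuous_pi; intro a; apply continuous_pi; intro b
    exact (hdiff a b).continuous
  have hg_cont : Continuous g := by
    apply continuous_pi; intro a; apply continuous_pi; intro b
    exact (hdiff b a).continuous
  set S : Set ℝ := {t | f t = g t} with hS_def
  have hS0 : (0 : ℝ) ∈ S := by
    show f 0 = g 0
    funext a b
    exact (congrFun (congrFun h0 a) b).symm
  have hS_closed : IsClosed S := isClosed_eq hf_cont hg_cont
  have hS_open : IsOpen S := by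
    rw [isOpen_iff_mem_nhds]
    intro t₁ ht₁
    obtain ⟨K, s, hs, hlip⟩ :=
      ((contDiff_todaV n).contDiffAt (x := f t₁)).exists_lipschitzOnWith
    have hfs : ∀ᶠ t in nhds t₁, HasDerivAt f (todaV n (f t)) t ∧ f t ∈ s := by
      have : ∀ᶠ t in nhds t₁, f t ∈ s := hf_cont.continuousAt.preimage_mem_nhds hs
      exact this.mono fun t ht => ⟨hf' t, ht⟩
    have hgs : ∀ᶠ t in nhds t₁, HasDerivAt g (todaV n (g t)) t ∧ g t ∈ s := by
      have hmem : g t₁ ∈ s := by rw [← ht₁]; exact mem_of_mem_nhds hs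
      have hs' : s ∈ nhds (g t₁) := by
        rw [← show f t₁ = g t₁ from ht₁]; exact hs
      have : ∀ᶠ t in nhds t₁, g t ∈ s := hg_cont.continuousAt.preimage_mem_nhds hs'
      exact this.mono fun t ht => ⟨hg' t, ht⟩
    have heq : f =ᶠ[nhds t₁] g :=
      ODE_solution_unique_of_eventually (v := fun _ => todaV n) (s := fun _ => s)
        (Filter.Eventually.of_forall fun _ => hlip) hfs hgs ht₁
    exact heq
  have hclopen : IsClopen S := ⟨hS_closed, hS_open⟩
  have : S = Set.univ := hclopen.eq_univ ⟨0, hS0⟩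
  intro t
  have ht : f t = g t := by rw [show f t = g t from by
    have : t ∈ S := this ▸ Set.mem_univ t
    exact this]
  ext a b
  exact (congrFun (congrFun ht b) a)
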